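/- arXiv:2304.07252 — 2 statements merged into one kernel-verified Lean document; each statement's English description precedes it below -/
import Mathlib

section
/- Let η ∈ L^∞(T) and let {a,b} be a nondegenerate pair in L^∞(T). Then the multiplication operator M_η commutes with S_{a,b} if and only if η is a.e. equal to a constant. -/
open MeasureTheory Complex Real AddCircle
open scoped ENNReal ComplexConjugate

noncomputable section

instance : Fact (0 < 2 * π) := ⟨by positivity⟩

/-- Normalized Haar (Lebesgue) measure on the unit circle, realized as `AddCircle (2π)`. -/
abbrev μT : Measure (AddCircle (2 * π)) := AddCircle.haarAddCircle

/-- The Lebesgue space `L²(𝕋)`. -/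
abbrev L2 : Type := Lp ℂ 2 μT

/-- The space `L^∞(𝕋)`. -/
abbrev Linf : Type := Lp ℂ ∞ μT

/-- Multiplication of an `L²` function by an `L^∞` function, as an element of `L²`. -/
def mul2 (a : Linf) (f : L2) : L2 :=
  ((Lp.memLp f).smul (r := 2) (Lp.memLp a)).toLp ((a : AddCircle (2 * π) → ℂ) • (f : AddCircle (2 * π) → ℂ))

lemma mul2_coe (a : Linf) (f : L2) :
    (mul2 a f : AddCircle (2 * π) → ℂ) =ᵐ[μT] fun x => a x * f x :=
  (MemLp.coeFn_toLp _)

/-- Multiplication in `L^∞`. -/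
def mulInf (a b : Linf) : Linf :=
  ((Lp.memLp b).smul (r := ∞) (Lp.memLp a)).toLp ((a : AddCircle (2 * π) → ℂ) • (b : AddCircle (2 * π) → ℂ))

lemma mulInf_coe (a b : Linf) :
    (mulInf a b : AddCircle (2 * π) → ℂ) =ᵐ[μT] fun x => a x * b x :=
  (MemLp.coeFn_toLp _)

/-- Complex conjugation on `Lp`. -/
def conjLp {p : ℝ≥0∞} [Fact (1 ≤ p)] (f : Lp ℂ p μT) : Lp ℂ p μT :=
  MemLp.toLp (fun x => conj (f x))
    ⟨continuous_star.comp_aestronglyMeasurable (Lp.aestronglyMeasurable f),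
      by
        rw [eLpNorm_congr_norm_ae (g := (f : AddCircle (2 * π) → ℂ))
          (Filter.Eventually.of_forall fun x => by simp)]
        exact (Lp.memLp f).2⟩

lemma conjLp_coe {p : ℝ≥0∞} [Fact (1 ≤ p)] (f : Lp ℂ p μT) :
    (conjLp f : AddCircle (2 * π) → ℂ) =ᵐ[μT] fun x => conj (f x) :=
  (MemLp.coeFn_toLp _)

/-- The Hardy space `H²`, as the subspace of `L²(𝕋)` of functions whose negative Fourier
coefficients vanish. -/
def Hardy : Submodule ℂ L2 where
  carrier := {f | ∀ n : ℤ, n < 0 → fourierBasis.repr f n = 0}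
  add_mem' := fun hf hg n hn => by simp [hf n hn, hg n hn]
  zero_mem' := fun n hn => by simp
  smul_mem' := fun c f hf n hn => by simp [hf n hn]

lemma hardy_isClosed : IsClosed (Hardy : Set L2) := by
  have h : (Hardy : Set L2)
      = ⋂ n : ℤ, ⋂ _ : n < 0, {f : L2 | fourierBasis.repr f n = 0} := by
    ext f
    simp [Hardy, Set.mem_iInter]
  rw [h]
  refine isClosed_iInter fun n => isClosed_iInter fun hn => ?_
  have hc : Continuous fun f : L2 => fourierBasis.repr f n := by
    have : (fun f : L2 => fourierBasis.repr f n)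
        = fun f : L2 => (innerSL ℂ (fourierBasis n : L2)) f := by
      ext f
      rw [HilbertBasis.repr_apply_apply]
      rfl
    rw [this]
    exact (innerSL ℂ (fourierBasis n : L2)).continuous
  exact isClosed_eq hc continuous_const

instance : CompleteSpace Hardy := hardy_isClosed.completeSpace_coe

/-- The Riesz projection `P⁺ : L² → L²`, i.e. the orthogonal projection onto `H²`. -/
def Pplus : L2 →L[ℂ] L2 := Hardy.subtypeL.comp Hardy.orthogonalProjectionOnto

/-- The complementary projection `P⁻ = I - P⁺`. -/
def Pminus : L2 →L[ℂ] L2 := ContinuousLinearMap.id ℂ L2 - Pplus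

lemma mul2_norm_le (a : Linf) (f : L2) : ‖mul2 a f‖ ≤ ‖a‖ * ‖f‖ := by
  rw [mul2, Lp.norm_toLp]
  have h := eLpNorm_smul_le_eLpNorm_top_mul_eLpNorm 2
    (Lp.aestronglyMeasurable f) (φ := (a : AddCircle (2 * π) → ℂ))
  refine le_trans (ENNReal.toReal_mono ?_ h) ?_
  · exact ENNReal.mul_ne_top (Lp.memLp a).2.ne (Lp.memLp f).2.ne
  · rw [ENNReal.toReal_mul, Lp.norm_def, Lp.norm_def]

/-- Multiplication by an `L^∞` function `a`, as a bounded operator `M_a` on `L²`. -/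
def Mult (a : Linf) : L2 →L[ℂ] L2 :=
  LinearMap.mkContinuous
    { toFun := mul2 a
      map_add' := fun f g => by
        refine Lp.ext ?_
        filter_upwards [mul2_coe a (f + g), mul2_coe a f, mul2_coe a g,
          Lp.coeFn_add f g, Lp.coeFn_add (mul2 a f) (mul2 a g)] with x h1 h2 h3 h4 h5
        simp only [h1, h5, Pi.add_apply, h2, h3, h4, mul_add]
      map_smul' := fun c f => by
        refine Lp.ext ?_
        filter_upwards [mul2_coe a (c • f), mul2_coe a f,
          Lp.coeFn_smul c f, Lp.coeFn_smul c (mul2 a f)] with x h1 h2 h3 h4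
        simp only [h1, h4, Pi.smul_apply, h2, h3, smul_eq_mul, RingHom.id_apply]
        ring }
    ‖a‖ (fun f => mul2_norm_le a f)

/-- The paired operator `S_{a,b} = a P⁺ + b P⁻` on `L²(𝕋)`. -/
def pairedS (a b : Linf) : L2 →L[ℂ] L2 :=
  (Mult a).comp Pplus + (Mult b).comp Pminus

/-- The transposed paired operator `Σ_{a,b} = P⁺ a + P⁻ b` on `L²(𝕋)`. -/
def pairedSigma (a b : Linf) : L2 →L[ℂ] L2 :=
  Pplus.comp (Mult a) + Pminus.comp (Mult b)

/-- Membership in `H^∞`: an `L^∞` function whose negative Fourier coefficients vanish. -/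
def MemHinf (a : Linf) : Prop := ∀ n : ℤ, n < 0 → fourierCoeff (a : AddCircle (2 * π) → ℂ) n = 0

/-- A pair `{a,b}` is nondegenerate if `a`, `b` and `a - b` are all nonzero a.e. on `𝕋`. -/
def Nondegenerate (a b : Linf) : Prop :=
  (∀ᵐ x ∂μT, a x ≠ 0) ∧ (∀ᵐ x ∂μT, b x ≠ 0) ∧ (∀ᵐ x ∂μT, a x - b x ≠ 0)

/-! Writing `P⁻ = I - P⁺` gives `S_{a,b} = M_b + M_{a-b} P⁺`. Since multiplication operators
commute and `M_{a-b}` is injective when `a - b ≠ 0` a.e., `M_η` commutes with `S_{a,b}` exactly when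
it commutes with `P⁺`. Commuting with `P⁺` forces `η = M_η e₀ ∈ H²` and `η e₋₁ ∈ (H²)ᗮ`, which kill
the negative and the positive Fourier coefficients of `η` respectively, so `η` is constant. -/

local notation "𝕋" => AddCircle (2 * π)

lemma Mult_coe (a : Linf) (f : L2) : (Mult a f : 𝕋 → ℂ) =ᵐ[μT] fun x => a x * f x :=
  mul2_coe a f

lemma Mult_comm (u v : Linf) (f : L2) : Mult u (Mult v f) = Mult v (Mult u f) := by
  refine Lp.ext ?_
  filter_upwards [Mult_coe u (Mult v f), Mult_coe v (Mult u f),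
    Mult_coe v f, Mult_coe u f] with x huv hvu hv hu
  rw [huv, hvu, hv, hu, mul_left_comm]

lemma Mult_sub (a b : Linf) : Mult (a - b) = Mult a - Mult b := by
  ext1 f
  refine Lp.ext ?_
  filter_upwards [Mult_coe (a - b) f, Mult_coe a f, Mult_coe b f,
    Lp.coeFn_sub (Mult a f) (Mult b f), Lp.coeFn_sub a b] with x hab ha hb hsub hsub'
  rw [sub_apply, hsub, Pi.sub_apply, hab, ha, hb, hsub', Pi.sub_apply,
    sub_mul]

lemma Mult_injective {c : Linf} (hc : ∀ᵐ x ∂μT, c x ≠ 0) : Function.Injective (Mult c) := by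
  refine (injective_iff_map_eq_zero (Mult c)).mpr fun f hf => Lp.ext ?_
  have hcf : (Mult c f : 𝕋 → ℂ) =ᵐ[μT] 0 := hf ▸ Lp.coeFn_zero ℂ 2 μT
  filter_upwards [Mult_coe c f, hcf, hc, Lp.coeFn_zero ℂ 2 μT] with x hmul hzero hcx hf0
  rw [hf0]
  exact (mul_eq_zero.mp (hmul ▸ hzero)).resolve_left hcx

lemma Mult_eq_smul_of_ae_eq_const {η : Linf} {c : ℂ} (hη : ∀ᵐ x ∂μT, η x = c) :
    Mult η = c • ContinuousLinearMap.id ℂ L2 := by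
  ext1 f
  refine Lp.ext ?_
  filter_upwards [Mult_coe η f, Lp.coeFn_smul c f, hη] with x hmul hsmul hηx
  rw [smul_apply, ContinuousLinearMap.id_apply, hmul, hsmul, Pi.smul_apply,
    hηx, smul_eq_mul]

lemma pairedS_eq (a b : Linf) : pairedS a b = Mult b + (Mult (a - b)).comp Pplus := by
  rw [pairedS, Pminus, Mult_sub, ContinuousLinearMap.comp_sub, ContinuousLinearMap.sub_comp,
    ContinuousLinearMap.comp_id]
  abel

lemma Mult_comp_Pplus_of_commute_pairedS {η a b : Linf} (hab : ∀ᵐ x ∂μT, a x - b x ≠ 0)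
    (h : (Mult η).comp (pairedS a b) = (pairedS a b).comp (Mult η)) :
    (Mult η).comp Pplus = Pplus.comp (Mult η) := by
  have hab' : ∀ᵐ x ∂μT, (a - b : Linf) x ≠ 0 := by
    filter_upwards [hab, Lp.coeFn_sub a b] with x hx hsub
    rwa [hsub]
  ext1 f
  apply Mult_injective hab'
  have hf := congrArg (· f) h
  simp only [pairedS_eq, ContinuousLinearMap.comp_apply, add_apply,
    map_add, Mult_comm η b, add_right_inj] at hf
  rwa [ContinuousLinearMap.comp_apply, ContinuousLinearMap.comp_apply, Mult_comm]

lemma Pplus_eq_starProjection : Pplus = Hardy.starProjection := rfl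

lemma fourierBasis_mem_Hardy {n : ℤ} (hn : 0 ≤ n) : fourierBasis n ∈ Hardy := by
  intro m hm
  rw [fourierBasis.repr_self]
  exact lp.single_apply_ne 2 n 1 (by omega)

lemma fourierBasis_mem_Hardy_orthogonal {n : ℤ} (hn : n < 0) : fourierBasis n ∈ Hardyᗮ := by
  intro f hf
  rw [← inner_conj_symm, ← fourierBasis.repr_apply_apply, hf n hn, map_zero]

lemma fourierCoeff_congr {f g : 𝕋 → ℂ} (h : f =ᵐ[μT] g) (n : ℤ) :
    fourierCoeff f n = fourierCoeff g n :=
  integral_congr_ae (h.mono fun x hx => by simp only [hx])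

lemma fourierBasis_repr_Mult (u : Linf) (m n : ℤ) :
    fourierBasis.repr (Mult u (fourierBasis m)) n = fourierCoeff (u : 𝕋 → ℂ) (n - m) := by
  have hmul : (Mult u (fourierBasis m) : 𝕋 → ℂ) =ᵐ[μT] fun x => fourier m x * u x := by
    filter_upwards [Mult_coe u (fourierBasis m),
      coe_fourierBasis (T := 2 * π) ▸ coeFn_fourierLp (T := 2 * π) 2 m] with x hu he
    rw [hu, he, mul_comm]
  rw [fourierBasis_repr, fourierCoeff_congr hmul]
  refine integral_congr_ae (Filter.Eventually.of_forall fun x => ?_)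
  simp only [smul_eq_mul, ← mul_assoc, ← fourier_add]
  congr 3
  ring

lemma ae_eq_const_of_fourierCoeff_eq_zero (u : Linf)
    (h : ∀ n : ℤ, n ≠ 0 → fourierCoeff (u : 𝕋 → ℂ) n = 0) :
    ∀ᵐ x ∂μT, u x = fourierCoeff (u : 𝕋 → ℂ) 0 := by
  set c := fourierCoeff (u : 𝕋 → ℂ) 0
  have hconst : Mult u (fourierBasis 0) = c • fourierBasis 0 := by
    refine fourierBasis.repr.injective (lp.ext (funext fun n => ?_))
    rw [fourierBasis_repr_Mult, sub_zero, map_smul, lp.coeFn_smul, Pi.smul_apply,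
      fourierBasis.repr_self]
    rcases eq_or_ne n 0 with rfl | hn
    · rw [lp.single_apply_self, smul_eq_mul, mul_one]
    · rw [h n hn, lp.single_apply_ne 2 0 1 hn, smul_zero]
  have he₀ : (fourierBasis (0 : ℤ) : 𝕋 → ℂ) =ᵐ[μT] fun _ => 1 := by
    filter_upwards [coe_fourierBasis (T := 2 * π) ▸ coeFn_fourierLp (T := 2 * π) 2 0] with x hx
    rw [hx, fourier_zero]
  filter_upwards [Mult_coe u (fourierBasis 0), Lp.coeFn_smul c (fourierBasis 0 : L2), he₀]
    with x hmul hsmul hx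
  rw [← mul_one (u x), ← hx, ← hmul, hconst, hsmul, Pi.smul_apply, hx, smul_eq_mul, mul_one]

lemma ae_eq_const_of_Mult_comp_Pplus {η : Linf} (h : (Mult η).comp Pplus = Pplus.comp (Mult η)) :
    ∃ c : ℂ, ∀ᵐ x ∂μT, η x = c := by
  have hcomm (f : L2) : Mult η (Pplus f) = Pplus (Mult η f) := congrArg (· f) h
  have hneg (n : ℤ) (hn : n < 0) : fourierCoeff (η : 𝕋 → ℂ) n = 0 := by
    have hmem : Mult η (fourierBasis 0) ∈ Hardy := by
      rw [← Submodule.starProjection_eq_self_iff, ← Pplus_eq_starProjection, ← hcomm,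
        Pplus_eq_starProjection, Submodule.starProjection_eq_self_iff.mpr
          (fourierBasis_mem_Hardy le_rfl)]
    have hcoeff := hmem n hn
    rwa [fourierBasis_repr_Mult, sub_zero] at hcoeff
  have hpos (n : ℤ) (hn : 0 < n) : fourierCoeff (η : 𝕋 → ℂ) n = 0 := by
    have hmem : Mult η (fourierBasis (-1)) ∈ Hardyᗮ := by
      rw [← Hardy.starProjection_apply_eq_zero_iff, ← Pplus_eq_starProjection, ← hcomm,
        Pplus_eq_starProjection, Hardy.starProjection_apply_eq_zero_iff.mpr
          (fourierBasis_mem_Hardy_orthogonal (by norm_num)), map_zero]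
    have hinner := Submodule.inner_right_of_mem_orthogonal
      (fourierBasis_mem_Hardy (show 0 ≤ n - 1 by omega)) hmem
    rwa [← fourierBasis.repr_apply_apply, fourierBasis_repr_Mult, sub_neg_eq_add,
      sub_add_cancel] at hinner
  exact ⟨_, ae_eq_const_of_fourierCoeff_eq_zero η fun n hn =>
    (lt_or_gt_of_ne hn).elim (hneg n) (hpos n)⟩

/-- For `η ∈ L^∞` and nondegenerate `{a,b}`, `M_η` commutes with `S_{a,b}` iff `η` is
a.e. equal to a constant. -/
theorem statement8 (η a b : Linf) (h : Nondegenerate a b) :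
    (Mult η).comp (pairedS a b) = (pairedS a b).comp (Mult η)
      ↔ ∃ c : ℂ, ∀ᵐ x ∂μT, η x = c := by
  refine ⟨fun hcomm => ae_eq_const_of_Mult_comp_Pplus
    (Mult_comp_Pplus_of_commute_pairedS h.2.2 hcomm), fun ⟨c, hc⟩ => ?_⟩
  ext1 f
  simp only [ContinuousLinearMap.comp_apply, Mult_eq_smul_of_ae_eq_const hc,
    smul_apply, ContinuousLinearMap.id_apply, map_smul]

end
end

section
/- Let a, b ∈ L^∞(T), both nonzero (in L^∞). If a ∈ H^∞ and b̄ ∈ H^∞, then ker(aP^+ + bP^-) = {0} in L^2(T). -/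
open MeasureTheory Complex Real AddCircle
open scoped ENNReal ComplexConjugate

noncomputable section

/-!
Split `f = P⁺f + P⁻f` with `P⁺f ∈ H²` and `P⁻f ∈ (H²)ᗮ`. Fourier coefficients of a product are
the convolution of those of the factors, so `a ∈ H^∞` keeps `a P⁺f` in `H²`, while `b̄ ∈ H^∞`
keeps `b P⁻f` in `(H²)ᗮ`; as `a P⁺f = -b P⁻f`, both products vanish. For sequences supported
on `ℕ` the convolution is the product in `ℂ⟦X⟧`, an integral domain, so `a P⁺f = 0` and `a ≠ 0`
force `P⁺f = 0`; reflecting `n ↦ -n` gives `P⁻f = 0` in the same way.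
-/

section Convolution

variable {R : Type*} [CommRing R]

lemma eq_zero_of_powerSeries_mk_eq_zero {x : ℤ → R} (hx : ∀ k < 0, x k = 0)
    (h : PowerSeries.mk (fun j : ℕ => x j) = 0) : x = 0 := by
  funext k
  rcases lt_or_ge k 0 with hk | hk
  · exact hx k hk
  · lift k to ℕ using hk
    simpa using congrArg (PowerSeries.coeff k) h

variable [TopologicalSpace R]

open Finset in
lemma tsum_mul_sub_eq_sum_antidiagonal {x y : ℤ → R} (hx : ∀ k < 0, x k = 0)
    (hy : ∀ k < 0, y k = 0) (n : ℕ) :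
    ∑' k : ℤ, x k * y (n - k) = ∑ p ∈ antidiagonal n, x p.1 * y p.2 := by
  rw [Finset.Nat.sum_antidiagonal_eq_sum_range_succ (fun i j => x i * y j),
    tsum_eq_sum (s := (Finset.range (n + 1)).map Nat.castEmbedding), Finset.sum_map]
  · refine Finset.sum_congr rfl fun j hj => ?_
    rw [Finset.mem_range] at hj
    simp [Nat.cast_sub (Nat.lt_succ_iff.mp hj)]
  · intro k hk
    rcases lt_or_ge k 0 with hk0 | hk0
    · rw [hx k hk0, zero_mul]
    · have hkn : (n : ℤ) - k < 0 := by
        by_contra hnk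
        lift k to ℕ using hk0
        exact hk (Finset.mem_map_of_mem _ (Finset.mem_range.mpr (by omega)))
      rw [hy _ hkn, mul_zero]

variable [NoZeroDivisors R]

theorem eq_zero_of_tsum_mul_sub_eq_zero_of_nonneg {x y : ℤ → R} (hx : ∀ k < 0, x k = 0)
    (hy : ∀ k < 0, y k = 0) (hy0 : y ≠ 0) (h : ∀ n : ℕ, ∑' k : ℤ, x k * y (n - k) = 0) :
    x = 0 := by
  have hmul : PowerSeries.mk (fun j : ℕ => x j) * PowerSeries.mk (fun j : ℕ => y j) = 0 := by
    ext n
    simp [PowerSeries.coeff_mul, ← tsum_mul_sub_eq_sum_antidiagonal hx hy, h n]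
  refine eq_zero_of_powerSeries_mk_eq_zero hx ((mul_eq_zero.mp hmul).resolve_right fun hy' => ?_)
  exact hy0 (eq_zero_of_powerSeries_mk_eq_zero hy hy')

theorem eq_zero_of_tsum_mul_sub_eq_zero_of_nonpos {x y : ℤ → R} (hx : ∀ k > 0, x k = 0)
    (hy : ∀ k > 0, y k = 0) (hy0 : y ≠ 0) (h : ∀ n : ℕ, ∑' k : ℤ, x k * y (-n - k) = 0) :
    x = 0 := by
  have hneg : x ∘ Neg.neg = 0 := by
    refine eq_zero_of_tsum_mul_sub_eq_zero_of_nonneg (x := x ∘ Neg.neg) (y := y ∘ Neg.neg)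
      (fun k hk => hx _ (by omega)) (fun k hk => hy _ (by omega))
      (fun hy' => hy0 (funext fun k => ?_)) fun n => ?_
    · simpa using congrFun hy' (-k)
    · rw [← h n, ← (Equiv.neg ℤ).tsum_eq]
      simp [neg_add_eq_sub]
  funext k
  simpa using congrFun hneg (-k)

end Convolution

lemma fourierCoeff_mul_fourier {T : ℝ} [Fact (0 < T)] (u : AddCircle T → ℂ) (k n : ℤ) :
    fourierCoeff (fun x => u x * fourier k x) n = fourierCoeff u (n - k) := by
  simp only [fourierCoeff, smul_eq_mul]
  refine integral_congr_ae (Filter.Eventually.of_forall fun x => ?_)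
  simp only [show -(n - k) = -n + k by ring, fourier_add]
  ring

lemma fourierCoeff_conjLp (b : Linf) (n : ℤ) :
    fourierCoeff (conjLp b : AddCircle (2 * π) → ℂ) n
      = conj (fourierCoeff (b : AddCircle (2 * π) → ℂ) (-n)) := by
  rw [fourierCoeff_congr_ae (conjLp_coe b), fourierCoeff, fourierCoeff, ← integral_conj]
  refine integral_congr_ae (Filter.Eventually.of_forall fun x => ?_)
  simp

lemma fourierCoeff_eq_zero_of_memHinf_conjLp {b : Linf} (hb : MemHinf (conjLp b)) {n : ℤ}
    (hn : 0 < n) : fourierCoeff (b : AddCircle (2 * π) → ℂ) n = 0 := by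
  simpa [fourierCoeff_conjLp] using hb (-n) (by omega)

lemma mul2_fourierBasis_ae_eq (u : Linf) (k : ℤ) :
    (mul2 u (fourierBasis k) : AddCircle (2 * π) → ℂ) =ᵐ[μT] fun x => u x * fourier k x := by
  filter_upwards [mul2_coe u (fourierBasis k), coeFn_fourierLp 2 k] with x hmul hk
  rw [hmul, coe_fourierBasis, hk]

lemma repr_mul2_fourierBasis (u : Linf) (k n : ℤ) :
    fourierBasis.repr (mul2 u (fourierBasis k)) n
      = fourierCoeff (u : AddCircle (2 * π) → ℂ) (n - k) := by
  rw [fourierBasis_repr, fourierCoeff_congr_ae (mul2_fourierBasis_ae_eq u k),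
    fourierCoeff_mul_fourier]

lemma repr_mul2 (u : Linf) (v : L2) (n : ℤ) :
    fourierBasis.repr (mul2 u v) n
      = ∑' k : ℤ, fourierBasis.repr v k * fourierCoeff (u : AddCircle (2 * π) → ℂ) (n - k) := by
  -- `w ↦ (u w)^(n)` is continuous, so it can be applied termwise to the Fourier expansion of `v`.
  let Φ : L2 →L[ℂ] ℂ := (innerSL ℂ (fourierBasis n : L2)).comp (Mult u)
  have hΦ (w : L2) : Φ w = fourierBasis.repr (mul2 u w) n := by
    rw [HilbertBasis.repr_apply_apply]
    rfl
  have hsum := ((fourierBasis (T := 2 * π)).hasSum_repr v).mapL Φ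
  simp only [map_smul, smul_eq_mul] at hsum
  simpa only [hΦ, repr_mul2_fourierBasis] using hsum.tsum_eq.symm

lemma fourierCoeff_ne_zero {a : Linf} (ha : a ≠ 0) :
    fourierCoeff (a : AddCircle (2 * π) → ℂ) ≠ 0 := by
  intro hcoeff
  have hmul : mul2 a (fourierBasis 0) = 0 := by
    refine fourierBasis.repr.map_eq_zero_iff.mp (lp.ext (funext fun n => ?_))
    rw [repr_mul2_fourierBasis, hcoeff]
    rfl
  refine ha (Lp.ext ?_)
  filter_upwards [mul2_fourierBasis_ae_eq a 0, Lp.coeFn_zero ℂ 2 μT, Lp.coeFn_zero ℂ ∞ μT]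
    with x hprod hzero2 hzero
  rw [hmul, hzero2, fourier_zero, mul_one] at hprod
  rw [hzero, ← hprod]

lemma fourierBasis_mem_Hardy_s11 {k : ℤ} (hk : 0 ≤ k) : (fourierBasis k : L2) ∈ Hardy := by
  intro m hm
  classical
  rw [HilbertBasis.repr_self]
  exact lp.single_apply_ne 2 k 1 (by omega)

lemma mem_orthogonal_Hardy_iff {g : L2} : g ∈ Hardyᗮ ↔ ∀ n ≥ 0, fourierBasis.repr g n = 0 := by
  refine ⟨fun hg n hn => ?_, fun hg h hh => ?_⟩
  · rw [HilbertBasis.repr_apply_apply]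
    exact hg _ (fourierBasis_mem_Hardy_s11 hn)
  · have hterm (n : ℤ) : inner ℂ h (fourierBasis n) * inner ℂ (fourierBasis n) g = 0 := by
      rw [← inner_conj_symm, ← HilbertBasis.repr_apply_apply, ← HilbertBasis.repr_apply_apply]
      rcases lt_or_ge n 0 with hn | hn
      · rw [hh n hn, map_zero, zero_mul]
      · rw [hg n hn, mul_zero]
    rw [← fourierBasis.tsum_inner_mul_inner]
    simp only [hterm, tsum_zero]

lemma Pplus_mem_Hardy (f : L2) : Pplus f ∈ Hardy := (Hardy.orthogonalProjectionOnto f).2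

lemma Pminus_mem_orthogonal_Hardy (f : L2) : Pminus f ∈ Hardyᗮ :=
  Hardy.sub_starProjection_mem_orthogonal f

lemma Pplus_add_Pminus (f : L2) : Pplus f + Pminus f = f := by
  simp [Pminus]

lemma pairedS_apply (a b : Linf) (f : L2) :
    pairedS a b f = mul2 a (Pplus f) + mul2 b (Pminus f) :=
  rfl

lemma mul2_mem_Hardy {a : Linf} (ha : MemHinf a) {g : L2} (hg : g ∈ Hardy) :
    mul2 a g ∈ Hardy := by
  intro n hn
  have hterm (k : ℤ) :
      fourierBasis.repr g k * fourierCoeff (a : AddCircle (2 * π) → ℂ) (n - k) = 0 := by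
    rcases lt_or_ge k 0 with hk | hk
    · rw [hg k hk, zero_mul]
    · rw [ha (n - k) (by omega), mul_zero]
  simp only [repr_mul2, hterm, tsum_zero]

lemma mul2_mem_orthogonal_Hardy {b : Linf} (hb : MemHinf (conjLp b)) {g : L2}
    (hg : g ∈ Hardyᗮ) : mul2 b g ∈ Hardyᗮ := by
  rw [mem_orthogonal_Hardy_iff] at hg ⊢
  intro n hn
  have hterm (k : ℤ) :
      fourierBasis.repr g k * fourierCoeff (b : AddCircle (2 * π) → ℂ) (n - k) = 0 := by
    rcases lt_or_ge k 0 with hk | hk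
    · rw [fourierCoeff_eq_zero_of_memHinf_conjLp hb (by omega), mul_zero]
    · rw [hg k hk, zero_mul]
  simp only [repr_mul2, hterm, tsum_zero]

lemma eq_zero_of_mul2_eq_zero_of_mem_Hardy {a : Linf} (ha : a ≠ 0) (haH : MemHinf a) {g : L2}
    (hg : g ∈ Hardy) (h : mul2 a g = 0) : g = 0 := by
  refine fourierBasis.repr.map_eq_zero_iff.mp (lp.ext ?_)
  refine eq_zero_of_tsum_mul_sub_eq_zero_of_nonneg hg haH (fourierCoeff_ne_zero ha) fun n => ?_
  rw [← repr_mul2, h, map_zero]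
  rfl

lemma eq_zero_of_mul2_eq_zero_of_mem_orthogonal_Hardy {b : Linf} (hb : b ≠ 0)
    (hbH : MemHinf (conjLp b)) {g : L2} (hg : g ∈ Hardyᗮ) (h : mul2 b g = 0) : g = 0 := by
  rw [mem_orthogonal_Hardy_iff] at hg
  refine fourierBasis.repr.map_eq_zero_iff.mp (lp.ext ?_)
  refine eq_zero_of_tsum_mul_sub_eq_zero_of_nonpos (fun k hk => hg k hk.le)
    (fun k hk => fourierCoeff_eq_zero_of_memHinf_conjLp hbH hk) (fourierCoeff_ne_zero hb)
    fun n => ?_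
  rw [← repr_mul2, h, map_zero]
  rfl

/-- If `a, b ∈ L^∞` are nonzero with `a ∈ H^∞` and `b̄ ∈ H^∞`, then
`ker (a P⁺ + b P⁻) = {0}`. -/
theorem statement11 (a b : Linf) (ha : a ≠ 0) (hb : b ≠ 0)
    (haH : MemHinf a) (hbH : MemHinf (conjLp b)) :
    ∀ f : L2, pairedS a b f = 0 → f = 0 := by
  intro f hf
  rw [pairedS_apply] at hf
  have hplus : mul2 a (Pplus f) ∈ Hardy := mul2_mem_Hardy haH (Pplus_mem_Hardy f)
  have hminus : mul2 b (Pminus f) ∈ Hardyᗮ :=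
    mul2_mem_orthogonal_Hardy hbH (Pminus_mem_orthogonal_Hardy f)
  have hminus_zero : mul2 b (Pminus f) = 0 := by
    refine Submodule.disjoint_def.mp Hardy.orthogonal_disjoint _ ?_ hminus
    rw [eq_neg_of_add_eq_zero_right hf]
    exact neg_mem hplus
  have hplus_zero : mul2 a (Pplus f) = 0 := by
    rwa [hminus_zero, add_zero] at hf
  rw [← Pplus_add_Pminus f,
    eq_zero_of_mul2_eq_zero_of_mem_Hardy ha haH (Pplus_mem_Hardy f) hplus_zero,
    eq_zero_of_mul2_eq_zero_of_mem_orthogonal_Hardy hb hbH (Pminus_mem_orthogonal_Hardy f)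
      hminus_zero, add_zero]

end
end
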